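/- arXiv:1004.4552 — 7 statements merged into one kernel-verified Lean document; each statement's English description precedes it below -/
import Mathlib

section
/- Let P ⊆ ℝⁿ be a rational polyhedron satisfying condition (★): for every nonnegative integer k, every r ∈ {0,…,k} and every integer vector w ∈ ℤⁿ, the set rP ∩ (w − (k−r)P) is box-integer. Then P has the integer decomposition property: for every positive integer k, every integer vector w ∈ kP can be written as w = x₁ + ⋯ + x_k with x₁,…,x_k integer vectors in P. -/
open Finset Pointwise

variable {ι : Type*} [Fintype ι]

/-- A vector is an integer vector if each coordinate is an integer. -/
def IsIntegerVec (x : ι → ℝ) : Prop := ∀ i, ∃ z : ℤ, x i = (z : ℝ)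

/-- `F` is a (nonempty, exposed) face of `P`: the set of points of `P` maximizing some
linear functional `⟨c, ·⟩` over `P`. -/
def IsFace (P F : Set (ι → ℝ)) : Prop :=
  F.Nonempty ∧ ∃ c : ι → ℝ, F = {x ∈ P | ∀ y ∈ P, ∑ i, c i * y i ≤ ∑ i, c i * x i}

/-- `P` is an integer polyhedron: every (nonempty) face contains an integer vector. -/
def IsIntegerPolyhedron (P : Set (ι → ℝ)) : Prop :=
  ∀ F : Set (ι → ℝ), IsFace P F → ∃ x ∈ F, IsIntegerVec x

/-- `Q` is box-integer: its intersection with any integer box is an integer polyhedron. -/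
def IsBoxInteger (Q : Set (ι → ℝ)) : Prop :=
  ∀ c d : ι → ℤ, (∀ i, c i ≤ d i) →
    IsIntegerPolyhedron {x ∈ Q | ∀ i, (c i : ℝ) ≤ x i ∧ x i ≤ (d i : ℝ)}

/-- Condition (★): for all `0 ≤ r ≤ k` and integer `w`, the set `rP ∩ (w - (k-r)P)`
is box-integer. -/
def ConditionStar (P : Set (ι → ℝ)) : Prop :=
  ∀ k r : ℕ, r ≤ k → ∀ w : ι → ℤ,
    IsBoxInteger (((r : ℝ) • P) ∩
      ((fun y => (fun i => (w i : ℝ)) - y) '' (((k - r : ℕ) : ℝ) • P)))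

/-- A rational polyhedron: `{x | Ax ≤ b}` for a rational matrix `A` and rational `b`. -/
def IsRationalPolyhedron {n : ℕ} (P : Set (Fin n → ℝ)) : Prop :=
  ∃ (m : ℕ) (A : Matrix (Fin m) (Fin n) ℚ) (b : Fin m → ℚ),
    P = {x | ∀ i, ∑ j, (A i j : ℝ) * x j ≤ (b i : ℝ)}

/-- The Integer Carathéodory Property: every integer vector `w ∈ kP` is a nonnegative
integer combination, with coefficients summing to `k`, of affinely independent integer
vectors in `P`. -/
def HasICP (P : Set (ι → ℝ)) : Prop :=
  ∀ k : ℕ, 0 < k → ∀ w : ι → ℤ, (fun i => (w i : ℝ)) ∈ (k : ℝ) • P →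
    ∃ (t : ℕ) (x : Fin t → (ι → ℝ)) (c : Fin t → ℕ),
      (∀ i, x i ∈ P) ∧ (∀ i, IsIntegerVec (x i)) ∧ AffineIndependent ℝ x ∧
      (∀ i, 0 < c i) ∧ (∑ i, c i = k) ∧ (fun j => (w j : ℝ)) = ∑ i, (c i : ℝ) • x i

/-
Peel off one summand at a time. If the integer vector `w` lies in `(k+1)P`, say `w = (k+1)p`
with `p ∈ P`, then `p` lies in `P ∩ (w - kP)`, which is box-integer by (★) with `r = 1`. The
nonempty polytope cut out of it by the integer box `⌊p⌋ ≤ x ≤ ⌈p⌉` is integer, so (taking the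
face of the zero functional) it contains an integer vector `x₁`. Then `x₁ ∈ P` and
`w - x₁ ∈ kP`, and induction on `k` decomposes `w - x₁`.
-/

theorem IsIntegerPolyhedron.exists_isIntegerVec {Q : Set (ι → ℝ)} (hQ : IsIntegerPolyhedron Q)
    (hne : Q.Nonempty) : ∃ x ∈ Q, IsIntegerVec x :=
  hQ Q ⟨hne, 0, by simp⟩

theorem IsBoxInteger.exists_isIntegerVec {Q : Set (ι → ℝ)} (hQ : IsBoxInteger Q)
    {p : ι → ℝ} (hp : p ∈ Q) : ∃ x ∈ Q, IsIntegerVec x := by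
  obtain ⟨x, ⟨hxQ, -⟩, hx⟩ := (hQ (fun i => ⌊p i⌋) (fun i => ⌈p i⌉)
    (fun i => Int.floor_le_ceil _)).exists_isIntegerVec
    ⟨p, hp, fun i => ⟨Int.floor_le _, Int.le_ceil _⟩⟩
  exact ⟨x, hxQ, hx⟩

theorem mem_image_const_sub_iff {α : Type*} [AddCommGroup α] {a x : α} {S : Set α} :
    x ∈ (fun y => a - y) '' S ↔ a - x ∈ S :=
  ⟨by rintro ⟨y, hy, rfl⟩; simpa using hy, fun h => ⟨a - x, h, sub_sub_cancel a x⟩⟩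

theorem ConditionStar.exists_integer_mem_sub_mem_smul {P : Set (ι → ℝ)} (hstar : ConditionStar P)
    {k : ℕ} {w : ι → ℤ} (hw : (fun i => (w i : ℝ)) ∈ ((k + 1 : ℕ) : ℝ) • P) :
    ∃ z : ι → ℤ, (fun i => (z i : ℝ)) ∈ P ∧ (fun i => ((w i - z i : ℤ) : ℝ)) ∈ (k : ℝ) • P := by
  obtain ⟨p, hp, hpw⟩ := Set.mem_smul_set.mp hw
  have hQ := hstar (k + 1) 1 (Nat.le_add_left 1 k) w
  rw [Nat.add_sub_cancel, Nat.cast_one, one_smul] at hQ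
  have hpQ : p ∈ P ∩ (fun y => (fun i => (w i : ℝ)) - y) '' ((k : ℝ) • P) := by
    refine ⟨hp, mem_image_const_sub_iff.mpr ?_⟩
    rw [← hpw, Nat.cast_succ, add_smul, one_smul, add_sub_cancel_right]
    exact Set.smul_mem_smul_set hp
  obtain ⟨x, ⟨hxP, hxw⟩, hx⟩ := hQ.exists_isIntegerVec hpQ
  choose z hz using hx
  have hxz : x = fun i => (z i : ℝ) := funext hz
  subst hxz
  refine ⟨z, hxP, ?_⟩
  simp only [Int.cast_sub]
  exact mem_image_const_sub_iff.mp hxw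

theorem ConditionStar.exists_sum_eq {P : Set (ι → ℝ)} (hstar : ConditionStar P) (k : ℕ)
    (w : ι → ℤ) (hw : (fun i => (w i : ℝ)) ∈ (k : ℝ) • P) :
    ∃ x : Fin k → (ι → ℝ), (∀ i, x i ∈ P) ∧ (∀ i, IsIntegerVec (x i)) ∧
      (fun j => (w j : ℝ)) = ∑ i, x i := by
  induction k generalizing w with
  | zero =>
    obtain ⟨p, -, hpw⟩ := Set.mem_smul_set.mp hw
    exact ⟨Fin.elim0, fun i => i.elim0, fun i => i.elim0, by simpa using hpw.symm⟩
  | succ k ih =>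
    obtain ⟨z, hzP, hwz⟩ := hstar.exists_integer_mem_sub_mem_smul hw
    obtain ⟨x, hxP, hxint, hxsum⟩ := ih (fun i => w i - z i) hwz
    refine ⟨Fin.cons (fun i => (z i : ℝ)) x, Fin.cases hzP hxP,
      Fin.cases (fun i => ⟨z i, rfl⟩) hxint, ?_⟩
    rw [Fin.sum_cons, ← hxsum]
    ext j
    simp

theorem conditionStar_integerDecomposition_general {n : ℕ} (P : Set (Fin n → ℝ))
    (hstar : ConditionStar P) :
    ∀ k : ℕ, 0 < k → ∀ w : Fin n → ℤ, (fun i => (w i : ℝ)) ∈ (k : ℝ) • P →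
      ∃ x : Fin k → (Fin n → ℝ), (∀ i, x i ∈ P) ∧ (∀ i, IsIntegerVec (x i)) ∧
        (fun j => (w j : ℝ)) = ∑ i, x i :=
  fun k _ w hw => hstar.exists_sum_eq k w hw

/-- A rational polyhedron satisfying condition (★) has the integer
decomposition property. -/
theorem conditionStar_integerDecomposition {n : ℕ} (P : Set (Fin n → ℝ))
    (hP : IsRationalPolyhedron P) (hstar : ConditionStar P) :
    ∀ k : ℕ, 0 < k → ∀ w : Fin n → ℤ, (fun i => (w i : ℝ)) ∈ (k : ℝ) • P →
      ∃ x : Fin k → (Fin n → ℝ), (∀ i, x i ∈ P) ∧ (∀ i, IsIntegerVec (x i)) ∧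
        (fun j => (w j : ℝ)) = ∑ i, x i :=
  conditionStar_integerDecomposition_general P hstar
end

section
/- Let P ⊆ ℝⁿ be a rational polyhedron satisfying condition (★): for every nonnegative integer k, every r ∈ {0,…,k} and every integer vector w ∈ ℤⁿ, the set rP ∩ (w − (k−r)P) is box-integer. Then P is an integer polyhedron, i.e., every nonempty face of P contains an integer vector. -/
open Finset Pointwise

variable {ι : Type*} [Fintype ι]

/-!
Let `F` be the face of `P = {Ax ≤ b}` on which `γ` is maximal, and `x ∈ F`. Rational solutions of
the rational system `Aᵢ z = bᵢ` (`i` tight at `x`) are dense in its real solutions, so there is a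
rational such `y` near `x`; for `y` close enough both `y` and `2x - y` lie in `P`, and then `y ∈ F`
since `x` is their midpoint. Clearing denominators, `w = q y` is integral and (★) with `k = q`,
`r = 1` makes `Q = P ∩ (w - (q - 1) P) ∩ [⌊y⌋, ⌈y⌉]` an integer polyhedron. It contains `y` and lies
in `P`, so the face of `Q` maximizing `γ` lies in `F` and contains an integer point.
-/

open Filter Topology Matrix

namespace LinearMap

variable {K V W : Type*} [DivisionRing K] [AddCommGroup V] [Module K V] [AddCommGroup W]
  [Module K W]

theorem exists_comp_comp_eq_self (f : V →ₗ[K] W) : ∃ g : W →ₗ[K] V, f ∘ₗ g ∘ₗ f = f := by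
  obtain ⟨p, hp⟩ := (range f).subtype.exists_leftInverse_of_injective (range f).ker_subtype
  obtain ⟨s, hs⟩ := f.rangeRestrict.exists_rightInverse_of_surjective f.range_rangeRestrict
  refine ⟨s ∘ₗ p, LinearMap.ext fun x => ?_⟩
  have hpf : p (f x) = f.rangeRestrict x := LinearMap.congr_fun hp (f.rangeRestrict x)
  have hfs := congrArg Subtype.val (LinearMap.congr_fun hs (f.rangeRestrict x))
  simpa [hpf] using hfs

end LinearMap

theorem Rat.cast_comp_sub {α : Type*} (u v : α → ℚ) :
    Rat.cast ∘ (u - v) = (Rat.cast ∘ u - Rat.cast ∘ v : α → ℝ) :=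
  funext fun i => Rat.cast_sub (u i) (v i)

theorem Rat.cast_comp_mulVec {m n : Type*} [Fintype n] (M : Matrix m n ℚ) (v : n → ℚ) :
    Rat.cast ∘ (M *ᵥ v) = M.map (↑) *ᵥ (Rat.cast ∘ v : n → ℝ) :=
  funext fun i => (Rat.castHom ℝ).map_mulVec M v i

namespace Matrix

theorem exists_mul_mul_eq_self {K m n : Type*} [Field K] [Fintype m] [Fintype n]
    [DecidableEq m] [DecidableEq n] (M : Matrix m n K) : ∃ G : Matrix n m K, M * G * M = M := by
  obtain ⟨g, hg⟩ := (toLin' M).exists_comp_comp_eq_self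
  refine ⟨LinearMap.toMatrix' g, toLin'.injective ?_⟩
  rw [toLin'_mul, toLin'_mul, toLin'_toMatrix']
  exact hg

theorem mem_closure_ratCast_solutions {m n : Type*} [Fintype m] [Fintype n] [DecidableEq m]
    [DecidableEq n] (M : Matrix m n ℚ) (c : m → ℚ) {x : n → ℝ}
    (hx : M.map (↑) *ᵥ x = Rat.cast ∘ c) :
    x ∈ closure ((Rat.cast ∘ ·) '' {y : n → ℚ | M *ᵥ y = c}) := by
  obtain ⟨G, hG⟩ := M.exists_mul_mul_eq_self
  have hG' : M.map (↑) * G.map (↑) * M.map (↑) = M.map ((↑) : ℚ → ℝ) := by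
    have := congrArg (·.map (Rat.castHom ℝ)) hG
    rwa [Matrix.map_mul, Matrix.map_mul] at this
  have hGc : M *ᵥ G *ᵥ c = c := by
    apply Function.Injective.comp_left (Rat.cast_injective (α := ℝ))
    show Rat.cast ∘ _ = Rat.cast ∘ _
    rw [Rat.cast_comp_mulVec, Rat.cast_comp_mulVec, ← hx, mulVec_mulVec, mulVec_mulVec]
    exact congrArg (· *ᵥ x) hG'
  -- `r ↦ r - G (M r - c)` fixes `x` and sends rational vectors to rational solutions.
  set φ : (n → ℝ) → (n → ℝ) := fun r => r - G.map (↑) *ᵥ (M.map (↑) *ᵥ r - Rat.cast ∘ c)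
  have hφx : φ x = x := by simp [φ, hx]
  have hφ : Continuous φ := by fun_prop
  have hdense : x ∈ closure (Set.range (Rat.cast ∘ · : (n → ℚ) → n → ℝ)) :=
    (DenseRange.piMap fun _ => Rat.denseRange_cast (𝕜 := ℝ)).closure_range ▸ Set.mem_univ x
  rw [← hφx]
  refine map_mem_closure hφ hdense ?_
  rintro _ ⟨y, rfl⟩
  refine ⟨y - G *ᵥ (M *ᵥ y - c), ?_, ?_⟩
  · simp [mulVec_sub, mulVec_mulVec, ← Matrix.mul_assoc, hG, hGc]
  · change Rat.cast ∘ _ = φ (Rat.cast ∘ y)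
    rw [Rat.cast_comp_sub, Rat.cast_comp_mulVec, Rat.cast_comp_sub, Rat.cast_comp_mulVec]

theorem eventually_mulVec_le_of_tight {m n : Type*} [Finite m] [Fintype n] {A : Matrix m n ℝ}
    {b : m → ℝ} {x : n → ℝ} (hx : A *ᵥ x ≤ b) :
    ∀ᶠ z in 𝓝 x, (∀ i, (A *ᵥ x) i = b i → (A *ᵥ z) i = b i) → A *ᵥ z ≤ b := by
  have hslack : ∀ᶠ z in 𝓝 x, ∀ i, (A *ᵥ x) i < b i → (A *ᵥ z) i < b i :=
    eventually_all.2 fun i => eventually_imp_distrib_left.2 fun h =>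
      (by fun_prop : Continuous fun z => (A *ᵥ z) i).continuousAt.eventually_lt
        continuousAt_const h
  filter_upwards [hslack] with z hlt heq i
  exact (hx i).eq_or_lt.elim (fun h => (heq i h).le) fun h => (hlt i h).le

end Matrix

theorem exists_pos_nat_mul_eq_intCast (y : ι → ℚ) :
    ∃ q : ℕ, 0 < q ∧ ∃ w : ι → ℤ, ∀ i, (q : ℚ) * y i = w i := by
  classical
  refine ⟨∏ i, (y i).den, Finset.prod_pos fun i _ => (y i).pos,
    fun i => (y i).num * ∏ j ∈ univ.erase i, (y j).den, fun i => ?_⟩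
  rw [← Finset.mul_prod_erase univ _ (mem_univ i)]
  push_cast
  rw [← Rat.den_mul_eq_num]
  ring

theorem IsIntegerPolyhedron.exists_isIntegerVec_le {Q : Set (ι → ℝ)}
    (hQ : IsIntegerPolyhedron Q) (γ : ι → ℝ) {y : ι → ℝ} (hy : y ∈ Q)
    (hmax : ∀ v ∈ Q, ∑ i, γ i * v i ≤ ∑ i, γ i * y i) :
    ∃ u ∈ Q, IsIntegerVec u ∧ ∑ i, γ i * y i ≤ ∑ i, γ i * u i := by
  obtain ⟨u, hu, hint⟩ := hQ {x ∈ Q | ∀ v ∈ Q, ∑ i, γ i * v i ≤ ∑ i, γ i * x i}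
    ⟨⟨y, hy, hmax⟩, γ, rfl⟩
  exact ⟨u, hu.1, hint, hu.2 y hy⟩

theorem ConditionStar.exists_isIntegerVec_mem_of_mem_face {P F : Set (ι → ℝ)}
    (hstar : ConditionStar P) (hF : IsFace P F) {y : ι → ℝ} (hy : y ∈ F) {q : ℕ} (hq : 0 < q)
    (w : ι → ℤ) (hw : ∀ i, (q : ℝ) * y i = w i) : ∃ u ∈ F, IsIntegerVec u := by
  obtain ⟨-, γ, rfl⟩ := hF
  obtain ⟨hyP, hmax⟩ := hy
  have hQ := hstar q 1 hq w (fun i => ⌊y i⌋) (fun i => ⌈y i⌉) fun i => Int.floor_le_ceil _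
  rw [Nat.cast_one, one_smul] at hQ
  have hyw : y ∈ (fun z => (fun i => (w i : ℝ)) - z) '' (((q - 1 : ℕ) : ℝ) • P) := by
    refine ⟨((q - 1 : ℕ) : ℝ) • y, Set.smul_mem_smul_set hyP, funext fun i => ?_⟩
    simp only [Pi.sub_apply, Pi.smul_apply, smul_eq_mul, Nat.cast_sub hq, Nat.cast_one, ← hw i]
    ring
  obtain ⟨u, ⟨⟨huP, -⟩, -⟩, hu, hyu⟩ := hQ.exists_isIntegerVec_le γ
    ⟨⟨hyP, hyw⟩, fun i => ⟨Int.floor_le _, Int.le_ceil _⟩⟩ fun v hv => hmax v hv.1.1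
  exact ⟨u, Set.mem_sep huP fun z hz => (hmax z hz).trans hyu, hu⟩

theorem IsFace.exists_ratCast_mem {κ : Type*} [Fintype κ] {P F : Set (ι → ℝ)}
    (A : Matrix κ ι ℚ) (b : κ → ℚ) (hP : P = {x | ∀ i, ∑ j, (A i j : ℝ) * x j ≤ b i})
    (hF : IsFace P F) : ∃ y : ι → ℚ, Rat.cast ∘ y ∈ F := by
  classical
  subst hP
  obtain ⟨⟨x, hx⟩, γ, rfl⟩ := hF
  obtain ⟨hxP, hxmax⟩ := hx
  set A' : Matrix κ ι ℝ := A.map (↑)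
  change A' *ᵥ x ≤ Rat.cast ∘ b at hxP
  have hclos := (A.submatrix (↑) id : Matrix {i // (A' *ᵥ x) i = b i} ι ℚ)
    |>.mem_closure_ratCast_solutions (b ∘ (↑)) (funext fun i => i.2)
  have hnear := eventually_mulVec_le_of_tight hxP
  have hrefl : Tendsto (fun z => (2 : ℝ) • x - z) (𝓝 x) (𝓝 x) :=
    (continuous_const.sub continuous_id).tendsto' x x (by simp [two_smul])
  obtain ⟨_, ⟨y, hy, rfl⟩, hyP, hy'P⟩ := ((mem_closure_iff_frequently.1 hclos).and_eventually
    (hnear.and (hrefl.eventually hnear))).exists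
  have htight (i) (hi : (A' *ᵥ x) i = (Rat.cast ∘ b) i) :
      (A' *ᵥ Rat.cast ∘ y) i = (Rat.cast ∘ b) i := by
    rw [← congrFun (Rat.cast_comp_mulVec A y) i]
    exact congrArg Rat.cast (congrFun hy ⟨i, hi⟩)
  replace hyP := hyP htight
  have hmid := hxmax _ <| hy'P fun i hi => by
    rw [mulVec_sub, mulVec_smul, Pi.sub_apply, Pi.smul_apply, hi, htight i hi, two_smul,
      add_sub_cancel_right]
  have hxy : γ ⬝ᵥ x ≤ γ ⬝ᵥ (Rat.cast ∘ y) := by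
    change γ ⬝ᵥ ((2 : ℝ) • x - Rat.cast ∘ y) ≤ γ ⬝ᵥ x at hmid
    rw [dotProduct_sub, dotProduct_smul, smul_eq_mul] at hmid
    linarith
  exact ⟨y, hyP, fun z hz => (hxmax z hz).trans hxy⟩

/-- A rational polyhedron satisfying condition (★) is an integer
polyhedron. -/
theorem conditionStar_integerPolyhedron {n : ℕ} (P : Set (Fin n → ℝ))
    (hP : IsRationalPolyhedron P) (hstar : ConditionStar P) :
    IsIntegerPolyhedron P := by
  obtain ⟨m, A, b, hPAb⟩ := hP
  intro F hF
  obtain ⟨y, hyF⟩ := hF.exists_ratCast_mem A b hPAb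
  obtain ⟨q, hq, w, hw⟩ := exists_pos_nat_mul_eq_intCast y
  refine hstar.exists_isIntegerVec_mem_of_mem_face hF hyF hq w fun i => ?_
  rw [Function.comp_apply]
  exact_mod_cast hw i
end

section
/- Let P ⊆ ℝⁿ be a rational polyhedron satisfying condition (★): for every nonnegative integer k, every r ∈ {0,…,k} and every integer vector w ∈ ℤⁿ, the set rP ∩ (w − (k−r)P) is box-integer. Then every face F of P also satisfies condition (★). -/
/-!
Let `F = {x ∈ P | ⟨c, x⟩ = δ}` with `⟨c, ·⟩ ≤ δ` on `P`. Then `⟨c, ·⟩ ≤ tδ` on `tP` and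
`tF = {x ∈ tP | ⟨c, x⟩ = tδ}`. If `rF ∩ (w - sF)` contains a point, then `⟨c, w⟩ = (r + s)δ`, so
every `x ∈ rP ∩ (w - sP)` satisfies both `⟨c, x⟩ ≤ rδ` and `⟨c, x⟩ = ⟨c, w⟩ - ⟨c, w - x⟩ ≥ rδ`;
hence `rF ∩ (w - sF) = rP ∩ (w - sP)`. So each set in condition (★) for `F` is either empty or
one of the sets in condition (★) for `P`.
-/

open Finset Pointwise

variable {ι : Type*} [Fintype ι]

open Matrix

lemma IsFace.exists_eq_sep_dotProduct_eq {P F : Set (ι → ℝ)} (hF : IsFace P F) :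
    ∃ (c : ι → ℝ) (δ : ℝ), (∀ y ∈ P, c ⬝ᵥ y ≤ δ) ∧ F = {x ∈ P | c ⬝ᵥ x = δ} := by
  obtain ⟨⟨x₀, hx₀⟩, c, rfl⟩ := hF
  refine ⟨c, c ⬝ᵥ x₀, hx₀.2, Set.ext fun x => ⟨fun hx => ⟨hx.1, ?_⟩, fun hx => ⟨hx.1, ?_⟩⟩⟩
  · exact le_antisymm (hx₀.2 x hx.1) (hx.2 x₀ hx₀.1)
  · exact fun y hy => (hx₀.2 y hy).trans_eq hx.2.symm

lemma isBoxInteger_empty : IsBoxInteger (∅ : Set (ι → ℝ)) := by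
  rintro c d - G ⟨⟨x, hx⟩, e, rfl⟩
  exact hx.1.1.elim

lemma mem_image_const_sub {G : Type*} [AddCommGroup G] {W x : G} {S : Set G} :
    x ∈ (fun y => W - y) '' S ↔ W - x ∈ S :=
  Set.mem_image_iff_of_inverse (fun y => sub_sub_cancel W y) (fun y => sub_sub_cancel W y)

section SupportingHyperplane

variable {P : Set (ι → ℝ)} {c : ι → ℝ} {δ : ℝ}

lemma dotProduct_le_of_mem_smul (hP : ∀ y ∈ P, c ⬝ᵥ y ≤ δ) {t : ℝ} (ht : 0 ≤ t) {x : ι → ℝ}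
    (hx : x ∈ t • P) : c ⬝ᵥ x ≤ t * δ := by
  obtain ⟨y, hy, rfl⟩ := hx
  rw [dotProduct_smul, smul_eq_mul]
  exact mul_le_mul_of_nonneg_left (hP y hy) ht

lemma smul_sep_dotProduct_eq (hne : {y ∈ P | c ⬝ᵥ y = δ}.Nonempty) (t : ℝ) :
    t • {y ∈ P | c ⬝ᵥ y = δ} = {x ∈ t • P | c ⬝ᵥ x = t * δ} := by
  rcases eq_or_ne t 0 with rfl | ht
  · rw [Set.zero_smul_set hne, Set.zero_smul_set (hne.mono fun _ hy => hy.1)]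
    ext x
    simp only [Set.mem_zero, Set.mem_ofPred_eq, zero_mul]
    exact ⟨fun hx => ⟨hx, hx ▸ dotProduct_zero c⟩, And.left⟩
  · ext x
    simp only [Set.mem_ofPred_eq, Set.mem_smul_set_iff_inv_smul_mem₀ ht, dotProduct_smul,
      smul_eq_mul]
    rw [inv_mul_eq_iff_eq_mul₀ ht]

lemma smul_inter_image_const_sub_smul_sep_eq_empty_or_eq (hP : ∀ y ∈ P, c ⬝ᵥ y ≤ δ) {r s : ℝ}
    (hr : 0 ≤ r) (hs : 0 ≤ s) (W : ι → ℝ) :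
    r • {y ∈ P | c ⬝ᵥ y = δ} ∩ (fun y => W - y) '' (s • {y ∈ P | c ⬝ᵥ y = δ}) = ∅ ∨
      r • {y ∈ P | c ⬝ᵥ y = δ} ∩ (fun y => W - y) '' (s • {y ∈ P | c ⬝ᵥ y = δ}) =
        r • P ∩ (fun y => W - y) '' (s • P) := by
  refine (Set.eq_empty_or_nonempty _).imp id fun ⟨x₀, hx₀r, hx₀s⟩ => ?_
  have hF := Set.smul_set_nonempty.1 ⟨x₀, hx₀r⟩
  rw [mem_image_const_sub] at hx₀s
  rw [smul_sep_dotProduct_eq hF] at hx₀r hx₀s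
  have hW : c ⬝ᵥ W = r * δ + s * δ := by
    linarith [hx₀r.2, hx₀s.2, dotProduct_sub c W x₀]
  ext x
  simp only [Set.mem_inter_iff, mem_image_const_sub, smul_sep_dotProduct_eq hF,
    Set.mem_ofPred_eq]
  refine ⟨fun hx => ⟨hx.1.1, hx.2.1⟩, fun ⟨hx, hWx⟩ => ?_⟩
  have h₁ := dotProduct_le_of_mem_smul hP hr hx
  have h₂ := dotProduct_le_of_mem_smul hP hs hWx
  rw [dotProduct_sub] at h₂ ⊢
  exact ⟨⟨hx, by linarith⟩, hWx, by linarith⟩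

end SupportingHyperplane

theorem conditionStar_face_general {n : ℕ} (P : Set (Fin n → ℝ))
    (hstar : ConditionStar P)
    (F : Set (Fin n → ℝ)) (hF : IsFace P F) :
    ConditionStar F := by
  obtain ⟨c, δ, hP, rfl⟩ := hF.exists_eq_sep_dotProduct_eq
  intro k r hrk w
  rcases smul_inter_image_const_sub_smul_sep_eq_empty_or_eq hP r.cast_nonneg (k - r).cast_nonneg
    (fun i => (w i : ℝ)) with hempty | heq
  · rw [hempty]
    exact isBoxInteger_empty
  · rw [heq]
    exact hstar k r hrk w

/-- Condition (★) is inherited by faces. -/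
theorem conditionStar_face {n : ℕ} (P : Set (Fin n → ℝ))
    (hP : IsRationalPolyhedron P) (hstar : ConditionStar P)
    (F : Set (Fin n → ℝ)) (hF : IsFace P F) :
    ConditionStar F :=
  conditionStar_face_general P hstar F hF
end

section
/- Let P ⊆ ℝⁿ be a rational polyhedron satisfying condition (★): for every nonnegative integer k, every r ∈ {0,…,k} and every integer vector w ∈ ℤⁿ, the set rP ∩ (w − (k−r)P) is box-integer. Then P itself is box-integer. -/
/-!
A face `F` of `Q = P ∩ [c, d]` contains a rational point `x`: a system of rational linear
inequalities that is feasible over `ℝ` is feasible over `ℚ` (Fourier–Motzkin elimination), and a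
rational point of `Q` on which every row tight at a point of `F` is tight lies in `F` itself.
Choose an integer `q ≥ 2` with `w = q x` integral. Then `x` lies in `S = P ∩ (w - (q - 1) P)` and
in the box `[⌊x⌋, ⌈x⌉]`, so condition (★) with `k = q`, `r = 1` yields an integer point
`z = w - (q - 1) p` of `S` in that box, with `p ∈ P`. Rounding shows `p ∈ [c, d]`, hence `p ∈ Q`,
and for the functional `f` exposing `F` we get `f z = q f x - (q - 1) f p ≥ f x`, i.e. `z ∈ F`.
-/

open Finset Pointwise

variable {ι : Type*} [Fintype ι]

open Matrix Filter Topology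

variable {κ : Type*} {k : ℕ}

def solutionSet (K : Type*) [DivisionRing K] [LE K] (A : Matrix κ (Fin k) ℚ) (b : κ → ℚ) :
    Set (Fin k → K) :=
  {x | ∀ i, ∑ j, (A i j : K) * x j ≤ b i}

lemma Finite.exists_forall_le_forall_le {α κ' : Type*} [LinearOrder α] [Nonempty α] [Finite κ]
    [Finite κ'] {f : κ → α} {g : κ' → α} (h : ∀ i j, f i ≤ g j) :
    ∃ t, (∀ i, f i ≤ t) ∧ ∀ j, t ≤ g j := by
  cases isEmpty_or_nonempty κ
  · cases isEmpty_or_nonempty κ'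
    · exact ⟨Classical.arbitrary α, isEmptyElim, isEmptyElim⟩
    · obtain ⟨j₀, hj₀⟩ := Finite.exists_min g
      exact ⟨g j₀, isEmptyElim, hj₀⟩
  · obtain ⟨i₀, hi₀⟩ := Finite.exists_max f
    exact ⟨f i₀, hi₀, h i₀⟩

namespace FourierMotzkin

variable (A : Matrix κ (Fin (k + 1)) ℚ) (b : κ → ℚ)

/-- Rows of `A` not involving the last variable, and pairs of rows in which it has opposite
signs; each pair is combined positively so that the last variable cancels. -/
abbrev Index : Type _ :=
  {i // A i (Fin.last k) = 0} ⊕ ({i // 0 < A i (Fin.last k)} × {i // A i (Fin.last k) < 0})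

def elimMatrix : Matrix (Index A) (Fin k) ℚ
  | .inl i, j => A i j.castSucc
  | .inr (p, n), j => -A n (Fin.last k) * A p j.castSucc + A p (Fin.last k) * A n j.castSucc

def elimVec : Index A → ℚ
  | .inl i => b i
  | .inr (p, n) => -A n (Fin.last k) * b p + A p (Fin.last k) * b n

variable {K : Type*} [Field K] [LinearOrder K] [IsStrictOrderedRing K]

lemma sum_elimMatrix_inr (p : {i // 0 < A i (Fin.last k)}) (n : {i // A i (Fin.last k) < 0})
    (y : Fin k → K) :
    ∑ j, (elimMatrix A (.inr (p, n)) j : K) * y j =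
      -(A n (Fin.last k) : K) * ∑ j, (A p j.castSucc : K) * y j +
        (A p (Fin.last k) : K) * ∑ j, (A n j.castSucc : K) * y j := by
  simp only [elimMatrix, Rat.cast_add, Rat.cast_mul, Rat.cast_neg, add_mul, Finset.sum_add_distrib,
    Finset.mul_sum, mul_assoc]

lemma init_mem_solutionSet {x : Fin (k + 1) → K} (hx : x ∈ solutionSet K A b) :
    Fin.init x ∈ solutionSet K (elimMatrix A) (elimVec A b) := by
  have hrow (i : κ) :
      ∑ j : Fin k, (A i j.castSucc : K) * x j.castSucc + A i (Fin.last k) * x (Fin.last k) ≤ b i := by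
    simpa [Fin.sum_univ_castSucc] using hx i
  rintro (⟨i, hi⟩ | ⟨⟨p, hp⟩, ⟨n, hn⟩⟩)
  · simpa [elimMatrix, elimVec, Fin.init, hi] using hrow i
  · have hp' : (0 : K) < A p (Fin.last k) := by exact_mod_cast hp
    have hn' : (A n (Fin.last k) : K) < 0 := by exact_mod_cast hn
    rw [sum_elimMatrix_inr]
    simp only [elimVec, Fin.init, Rat.cast_add, Rat.cast_mul, Rat.cast_neg]
    nlinarith [hrow p, hrow n]

lemma exists_snoc_mem_solutionSet [Finite κ] {y : Fin k → K}
    (hy : y ∈ solutionSet K (elimMatrix A) (elimVec A b)) :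
    ∃ t, (Fin.snoc y t : Fin (k + 1) → K) ∈ solutionSet K A b := by
  set slack : κ → K := fun i => b i - ∑ j, (A i j.castSucc : K) * y j
  obtain ⟨t, hlow, hupp⟩ := Finite.exists_forall_le_forall_le
    (f := fun n : {i // A i (Fin.last k) < 0} => slack n / A n (Fin.last k))
    (g := fun p : {i // 0 < A i (Fin.last k)} => slack p / A p (Fin.last k))
    (fun n p => by
      have hp' : (0 : K) < A p (Fin.last k) := by exact_mod_cast p.2
      have hn' : (A n (Fin.last k) : K) < 0 := by exact_mod_cast n.2
      have := hy (.inr (p, n))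
      rw [sum_elimMatrix_inr] at this
      simp only [elimVec, Rat.cast_add, Rat.cast_mul, Rat.cast_neg] at this
      rw [div_le_iff_of_neg hn', div_mul_eq_mul_div, div_le_iff₀ hp']
      simp only [slack]
      linarith)
  refine ⟨t, fun i => ?_⟩
  have hsplit : ∑ j, (A i j : K) * (Fin.snoc y t : Fin (k + 1) → K) j =
      ∑ j, (A i j.castSucc : K) * y j + A i (Fin.last k) * t := by
    simp [Fin.sum_univ_castSucc]
  rw [hsplit, ← le_sub_iff_add_le', mul_comm]
  rcases lt_trichotomy (A i (Fin.last k)) 0 with hi | hi | hi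
  · have hi' : (A i (Fin.last k) : K) < 0 := by exact_mod_cast hi
    exact (div_le_iff_of_neg hi').1 (hlow ⟨i, hi⟩)
  · simpa [elimMatrix, elimVec, hi] using hy (.inl ⟨i, hi⟩)
  · have hi' : (0 : K) < A i (Fin.last k) := by exact_mod_cast hi
    exact (le_div_iff₀ hi').1 (hupp ⟨i, hi⟩)

end FourierMotzkin

theorem nonempty_solutionSet_of_nonempty {K : Type*} (L : Type*) [Field K] [LinearOrder K]
    [IsStrictOrderedRing K] [Field L] [LinearOrder L] [IsStrictOrderedRing L] [Finite κ]
    {A : Matrix κ (Fin k) ℚ} {b : κ → ℚ} (h : (solutionSet K A b).Nonempty) :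
    (solutionSet L A b).Nonempty := by
  induction k generalizing κ with
  | zero =>
    obtain ⟨x, hx⟩ := h
    refine ⟨0, fun i => ?_⟩
    simpa using hx i
  | succ k ih =>
    obtain ⟨x, hx⟩ := h
    obtain ⟨y, hy⟩ := ih ⟨_, FourierMotzkin.init_mem_solutionSet A b hx⟩
    obtain ⟨t, ht⟩ := FourierMotzkin.exists_snoc_mem_solutionSet A b hy
    exact ⟨_, ht⟩

section RationalPoints

variable {A : Matrix κ (Fin k) ℚ} {b : κ → ℚ}

lemma ratCast_mem_solutionSet {K : Type*} [Field K] [LinearOrder K] [IsStrictOrderedRing K]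
    {y : Fin k → ℚ} (hy : y ∈ solutionSet ℚ A b) : (fun j => (y j : K)) ∈ solutionSet K A b :=
  fun i => by simpa using (Rat.cast_le (K := K)).2 (hy i)

lemma mem_solutionSet_fromRows_neg {K : Type*} [Field K] [LinearOrder K] [IsStrictOrderedRing K]
    (s : Set κ) {x : Fin k → K} :
    x ∈ solutionSet K (fromRows A (-A.submatrix (↑) id)) (Sum.elim b fun i : s => -b i) ↔
      x ∈ solutionSet K A b ∧ ∀ i ∈ s, ∑ j, (A i j : K) * x j = b i := by
  simp only [solutionSet, Set.mem_ofPred_eq, Sum.forall, fromRows_apply_inl, fromRows_apply_inr,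
    Sum.elim_inl, Sum.elim_inr, Matrix.neg_apply, submatrix_apply, id_eq, Rat.cast_neg, neg_mul,
    sum_neg_distrib, neg_le_neg_iff, Subtype.forall, and_congr_right_iff]
  exact fun hx => forall₂_congr fun i _ => ⟨(hx i).antisymm, Eq.ge⟩

lemma exists_pos_add_smul_sub_mem_solutionSet [Finite κ] {x y : Fin k → ℝ}
    (hx : x ∈ solutionSet ℝ A b)
    (htight : ∀ i, ∑ j, (A i j : ℝ) * x j = b i → ∑ j, (A i j : ℝ) * y j = b i) :
    ∃ ε > (0 : ℝ), x + ε • (x - y) ∈ solutionSet ℝ A b := by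
  have hev : ∀ᶠ ε in 𝓝 (0 : ℝ), x + ε • (x - y) ∈ solutionSet ℝ A b := by
    refine eventually_all.2 fun i => ?_
    by_cases hi : ∑ j, (A i j : ℝ) * x j = b i
    · refine Eventually.of_forall fun ε => le_of_eq ?_
      change (fun j => (A i j : ℝ)) ⬝ᵥ (x + ε • (x - y)) = b i
      rw [dotProduct_add, dotProduct_smul, dotProduct_sub]
      change ∑ j, (A i j : ℝ) * x j + ε • (∑ j, (A i j : ℝ) * x j - ∑ j, (A i j : ℝ) * y j) = _
      rw [hi, htight i hi, sub_self, smul_zero, add_zero]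
    · refine (ContinuousAt.eventually_lt (by fun_prop) continuousAt_const ?_).mono
        fun ε => le_of_lt
      simpa using (hx i).lt_of_ne hi
  obtain ⟨ε, hmem, hε⟩ :=
    ((hev.filter_mono (nhdsWithin_le_nhds (s := Set.Ioi 0))).and self_mem_nhdsWithin).exists
  exact ⟨ε, hε, hmem⟩

theorem IsFace.exists_ratCast_mem_s5 [Finite κ] {F : Set (Fin k → ℝ)}
    (hF : IsFace (solutionSet ℝ A b) F) : ∃ y : Fin k → ℚ, (fun j => (y j : ℝ)) ∈ F := by
  obtain ⟨⟨x, hx⟩, c, rfl⟩ := hF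
  obtain ⟨hxQ, hxmax⟩ := hx
  -- Rows tight at `x` stay tight along the line through `x` and `y`, so a point beyond `x` on
  -- it lies in `Q`; maximality of `c` at `x` then forces `c y ≥ c x`.
  set tight : Set κ := {i | ∑ j, (A i j : ℝ) * x j = b i}
  obtain ⟨y, hy⟩ := nonempty_solutionSet_of_nonempty ℚ
    ⟨x, (mem_solutionSet_fromRows_neg tight).2 ⟨hxQ, fun i hi => hi⟩⟩
  obtain ⟨hyQ, hytight⟩ :=
    (mem_solutionSet_fromRows_neg tight).1 (ratCast_mem_solutionSet (K := ℝ) hy)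
  obtain ⟨ε, hε, hz⟩ := exists_pos_add_smul_sub_mem_solutionSet hxQ hytight
  refine ⟨y, hyQ, fun z hz' => (hxmax z hz').trans ?_⟩
  have := hxmax _ hz
  change c ⬝ᵥ (x + ε • (x - _)) ≤ c ⬝ᵥ x at this
  rw [dotProduct_add, dotProduct_smul, dotProduct_sub, smul_eq_mul] at this
  change c ⬝ᵥ x ≤ c ⬝ᵥ _
  nlinarith

end RationalPoints

lemma sep_box_eq_solutionSet (A : Matrix κ (Fin k) ℚ) (b : κ → ℚ) (c d : Fin k → ℤ) :
    {x ∈ solutionSet ℝ A b | ∀ i, (c i : ℝ) ≤ x i ∧ x i ≤ d i} =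
      solutionSet ℝ (fromRows A (fromRows 1 (-1)))
        (Sum.elim b (Sum.elim (fun i => d i) fun i => -c i)) := by
  ext x
  simp [solutionSet, Sum.forall, one_apply, apply_ite (Rat.cast : ℚ → ℝ), ite_mul, forall_and,
    and_comm]

lemma exists_nat_mul_eq_intCast (x : ι → ℚ) :
    ∃ q : ℕ, 2 ≤ q ∧ ∃ w : ι → ℤ, ∀ i, (q : ℝ) * x i = w i := by
  classical
  have hden : ∀ i, ∏ j, (x j).den = (x i).den * ∏ j ∈ univ.erase i, (x j).den := fun i =>
    (mul_prod_erase _ _ (mem_univ i)).symm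
  refine ⟨2 * ∏ i, (x i).den, ?_, fun i => 2 * (∏ j ∈ univ.erase i, (x j).den : ℕ) * (x i).num,
    fun i => ?_⟩
  · have : 0 < ∏ i, (x i).den := prod_pos fun i _ => (x i).pos
    omega
  · have hq : ((2 * ∏ j, (x j).den : ℕ) : ℚ) * x i =
        ((2 * (∏ j ∈ univ.erase i, (x j).den : ℕ) * (x i).num : ℤ) : ℚ) := by
      rw [hden i]
      push_cast
      rw [← Rat.den_mul_eq_num]
      ring
    exact_mod_cast hq

section Rounding

variable {q : ℕ} {w : ℤ} {x y p : ℝ}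

lemma le_intCast_of_floor_le (hq : 2 ≤ q) {d : ℤ} (hw : q * x = w) (hxd : x ≤ d) (hy : ⌊x⌋ ≤ y)
    (hp : ((q - 1 : ℕ) : ℝ) * p = w - y) : p ≤ d := by
  rw [Nat.cast_sub (by omega), Nat.cast_one] at hp
  have hq' : (1 : ℝ) < q := by exact_mod_cast hq
  -- `q (x - d)` is an integer below `x - d`
  have key : w - q * d ≤ ⌊x⌋ - d := by
    rw [← Int.floor_sub_intCast, Int.le_floor]
    push_cast
    nlinarith
  have key' : (w : ℝ) - q * d ≤ ⌊x⌋ - d := by exact_mod_cast key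
  nlinarith

lemma intCast_le_of_le_ceil (hq : 2 ≤ q) {c : ℤ} (hw : q * x = w) (hcx : c ≤ x) (hy : y ≤ ⌈x⌉)
    (hp : ((q - 1 : ℕ) : ℝ) * p = w - y) : c ≤ p := by
  have := le_intCast_of_floor_le (w := -w) (d := -c) (x := -x) (y := -y) (p := -p) hq
    (by push_cast; linarith) (by push_cast; linarith) (by rw [Int.floor_neg]; push_cast; linarith)
    (by push_cast; linarith)
  push_cast at this
  linarith

end Rounding

lemma IsIntegerPolyhedron.exists_isIntegerVec_mem {Q : Set (ι → ℝ)} (hQ : IsIntegerPolyhedron Q)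
    (hne : Q.Nonempty) : ∃ z ∈ Q, IsIntegerVec z :=
  hQ Q ⟨hne, 0, by simp⟩

theorem ConditionStar.exists_isIntegerVec_mem_face {P : Set (ι → ℝ)} (hP : ConditionStar P)
    {c d : ι → ℤ} {F : Set (ι → ℝ)} (hF : IsFace {x ∈ P | ∀ i, (c i : ℝ) ≤ x i ∧ x i ≤ d i} F)
    {x : ι → ℝ} (hx : x ∈ F) {q : ℕ} (hq : 2 ≤ q) {w : ι → ℤ} (hw : ∀ i, (q : ℝ) * x i = w i) :
    ∃ z ∈ F, IsIntegerVec z := by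
  obtain ⟨-, f, rfl⟩ := hF
  obtain ⟨⟨hxP, hxbox⟩, hxmax⟩ := hx
  have hwx : (fun i => (w i : ℝ)) = (q : ℝ) • x := funext fun i => (hw i).symm
  have hxT : x ∈ {y ∈ ((1 : ℕ) : ℝ) • P ∩
      (fun y => (fun i => (w i : ℝ)) - y) '' (((q - 1 : ℕ) : ℝ) • P) |
        ∀ i, ((⌊x i⌋ : ℤ) : ℝ) ≤ y i ∧ y i ≤ ((⌈x i⌉ : ℤ) : ℝ)} := by
    refine ⟨⟨by simpa using hxP, _, Set.smul_mem_smul_set hxP, ?_⟩,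
      fun i => ⟨Int.floor_le _, Int.le_ceil _⟩⟩
    rw [hwx, Nat.cast_sub (by omega), Nat.cast_one, sub_smul, one_smul]
    exact sub_sub_cancel _ _
  obtain ⟨z, ⟨⟨hzP, _, ⟨p, hpP, rfl⟩, rfl⟩, hzbox⟩, hz⟩ :=
    (hP q 1 (by omega) w _ _ fun i => Int.floor_le_ceil (x i)).exists_isIntegerVec_mem ⟨x, hxT⟩
  have hpz (i : ι) : ((q - 1 : ℕ) : ℝ) * p i =
      w i - ((fun i => (w i : ℝ)) - ((q - 1 : ℕ) : ℝ) • p) i := by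
    simp
  have hcx (i : ι) : (c i : ℝ) ≤ ⌊x i⌋ := by exact_mod_cast Int.le_floor.2 (hxbox i).1
  have hxd (i : ι) : (⌈x i⌉ : ℝ) ≤ d i := by exact_mod_cast Int.ceil_le.2 (hxbox i).2
  have hpQ : p ∈ {x ∈ P | ∀ i, (c i : ℝ) ≤ x i ∧ x i ≤ d i} :=
    ⟨hpP, fun i => ⟨intCast_le_of_le_ceil hq (hw i) (hxbox i).1 (hzbox i).2 (hpz i),
      le_intCast_of_floor_le hq (hw i) (hxbox i).2 (hzbox i).1 (hpz i)⟩⟩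
  refine ⟨_, ⟨⟨by simpa using hzP, fun i => ⟨(hcx i).trans (hzbox i).1,
    (hzbox i).2.trans (hxd i)⟩⟩, fun y hy => (hxmax y hy).trans ?_⟩, hz⟩
  have hpx : f ⬝ᵥ p ≤ f ⬝ᵥ x := hxmax p hpQ
  change f ⬝ᵥ x ≤ f ⬝ᵥ ((fun i => (w i : ℝ)) - ((q - 1 : ℕ) : ℝ) • p)
  rw [hwx, Nat.cast_sub (by omega), dotProduct_sub, dotProduct_smul, dotProduct_smul,
    smul_eq_mul, smul_eq_mul, Nat.cast_one]
  have hq' : (1 : ℝ) ≤ q := by exact_mod_cast (by omega : 1 ≤ q)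
  nlinarith

/-- A rational polyhedron satisfying condition (★) is box-integer. -/
theorem conditionStar_boxInteger {n : ℕ} (P : Set (Fin n → ℝ))
    (hP : IsRationalPolyhedron P) (hstar : ConditionStar P) :
    IsBoxInteger P := by
  obtain ⟨m, A, b, rfl⟩ := hP
  intro c d _ F hF
  obtain ⟨x, hxF⟩ := IsFace.exists_ratCast_mem_s5 (sep_box_eq_solutionSet A b c d ▸ hF)
  obtain ⟨q, hq, w, hw⟩ := exists_nat_mul_eq_intCast x
  exact hstar.exists_isIntegerVec_mem_face hF hxF hq hw
end

section
/- Let Q₁, Q₂ ⊆ ℝⁿ be polytopes and let y be a vertex (extreme point) of Q₁ ∩ Q₂. For i = 1, 2, let F_i be the inclusionwise minimal face of Q_i containing y, and let H_i be the affine hull of F_i. Then H₁ ∩ H₂ = {y}. -/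
/-!
At a point `y` of a polytope `Q`, the minimal face `F` containing `y` lies in `y + L`, where `L` is
the lineality space of the cone of feasible directions of `Q` at `y`: if `y - x` were not a
feasible direction for some `x ∈ F`, Farkas' lemma would give a functional that is maximized over
`Q` at `y` but not at `x`, and its face of maximizers would contain `y` but not `F`.
So every `z ∈ aff F₁ ∩ aff F₂` lets one move from `y` in both directions `±(z - y)` without
leaving `Q₁ ∩ Q₂`, which for an extreme point `y` forces `z = y`.
-/

open Finset Pointwise

variable {ι : Type*} [Fintype ι]

/-- A polytope: the convex hull of finitely many points. -/
def IsPolytope (Q : Set (ι → ℝ)) : Prop :=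
  ∃ S : Finset (ι → ℝ), Q = convexHull ℝ (S : Set (ι → ℝ))

section

variable {E : Type*} [AddCommGroup E] [Module ℝ E]

namespace PointedCone

lemma nonpos_of_mem_hull {s : Set E} {g : Module.Dual ℝ E} (hs : ∀ x ∈ s, g x ≤ 0)
    {x : E} (hx : x ∈ hull ℝ s) : g x ≤ 0 := by
  have : hull ℝ s ≤ (positive ℝ ℝ).comap (-g) :=
    Submodule.span_le.2 fun x hx => by simpa using hs x hx
  simpa using this hx

theorem mem_hull_range_or_exists_dual {κ : Type*} [Finite κ] (v : κ → E) (b : E) :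
    b ∈ hull ℝ (Set.range v) ∨ ∃ f : Module.Dual ℝ E, (∀ i, f (v i) ≤ 0) ∧ 0 < f b := by
  induction κ using Finite.induction_empty_option generalizing b with
  | of_equiv e ih =>
    rcases ih (v ∘ e) b with h | ⟨f, hf, hfb⟩
    · exact .inl (by rwa [EquivLike.range_comp] at h)
    · exact .inr ⟨f, e.forall_congr_right.1 hf, hfb⟩
  | h_empty =>
    by_cases hb : b = 0
    · exact .inl (hb ▸ zero_mem _)
    · obtain ⟨φ, hφ⟩ := Module.Projective.exists_dual_ne_zero ℝ hb
      exact .inr ⟨φ b • φ, fun i => i.elim, by simpa using mul_self_pos.2 hφ⟩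
  | @h_option α _ ih =>
    set a := v none
    have hle : hull ℝ (Set.range (v ∘ some)) ≤ hull ℝ (Set.range v) :=
      Submodule.span_mono (Set.range_comp_subset_range _ _)
    obtain hb | ⟨g, hg, hgb⟩ := ih (v ∘ some) b
    · exact .inl (hle hb)
    by_cases hga : g a ≤ 0
    · exact .inr ⟨g, Option.forall.2 ⟨hga, hg⟩, hgb⟩
    push Not at hga
    -- `π` projects along `a` onto the kernel of `g`
    set π : E →ₗ[ℝ] E := LinearMap.id - (g a)⁻¹ • g.smulRight a with hπ
    have hπ_apply (x : E) : π x = x - (g x / g a) • a := by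
      simp [hπ, div_eq_inv_mul, mul_smul]
    obtain hπb | ⟨h, hh, hhb⟩ := ih (π ∘ v ∘ some) (π b)
    · rw [Set.range_comp] at hπb
      obtain ⟨u, hu, hπu⟩ := (Submodule.span_image (π.restrictScalars {c : ℝ // 0 ≤ c})).le hπb
      have hgu : g u ≤ 0 := nonpos_of_mem_hull (Set.forall_mem_range.2 hg) hu
      have hb : b = u + (g (b - u) / g a) • a := by
        have : π (b - u) = 0 := by simp [map_sub, ← hπu]
        rw [hπ_apply, sub_eq_zero] at this
        rw [← this]; abel
      have hc : 0 ≤ g (b - u) / g a := div_nonneg (by rw [map_sub]; linarith) hga.le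
      exact .inl (hb ▸ add_mem (hle hu) (smul_mem _ hc (subset_hull (Set.mem_range_self none))))
    · refine .inr ⟨h ∘ₗ π, Option.forall.2 ⟨?_, hh⟩, hhb⟩
      simp [hπ_apply, hga.ne', a]

end PointedCone

def feasibleCone (C : Set E) (y : E) : PointedCone ℝ E := PointedCone.hull ℝ (-y +ᵥ C)

variable {C C₁ C₂ : Set E} {x y d : E}

lemma sub_mem_feasibleCone (hx : x ∈ C) : x - y ∈ feasibleCone C y :=
  PointedCone.subset_hull ⟨x, hx, neg_add_eq_sub y x⟩

lemma Convex.add_smul_mem_of_le (hC : Convex ℝ C) (hy : y ∈ C) {ε t : ℝ}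
    (h : y + ε • d ∈ C) (ht : 0 ≤ t) (htε : t ≤ ε) : y + t • d ∈ C := by
  rcases ht.eq_or_lt with rfl | ht
  · simpa using hy
  have hε : 0 < ε := ht.trans_le htε
  simpa [smul_smul, div_mul_cancel₀ t hε.ne'] using
    hC.add_smul_mem hy h ⟨div_nonneg ht.le hε.le, (div_le_one hε).2 htε⟩

lemma mem_feasibleCone_iff (hC : Convex ℝ C) (hy : y ∈ C) :
    d ∈ feasibleCone C y ↔ ∃ ε : ℝ, 0 < ε ∧ y + ε • d ∈ C := by
  constructor
  · intro hd
    have hpointed : (ConvexCone.hull ℝ (-y +ᵥ C)).Pointed :=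
      ConvexCone.subset_hull ⟨y, hy, neg_add_cancel y⟩
    have : feasibleCone C y ≤ (ConvexCone.hull ℝ (-y +ᵥ C)).toPointedCone hpointed :=
      Submodule.span_le.2 ConvexCone.subset_hull
    obtain ⟨r, hr, _, ⟨c, hc, rfl⟩, rfl⟩ :=
      (ConvexCone.mem_hull_of_convex (hC.vadd _)).1 (this hd)
    refine ⟨r⁻¹, inv_pos.2 hr, ?_⟩
    simpa [smul_smul, inv_mul_cancel₀ hr.ne'] using hc
  · rintro ⟨ε, hε, h⟩
    simpa [smul_smul, inv_mul_cancel₀ hε.ne'] using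
      (feasibleCone C y).smul_mem (inv_nonneg.2 hε.le) (sub_mem_feasibleCone (y := y) h)

lemma feasibleCone_inf_le_feasibleCone_inter (hC₁ : Convex ℝ C₁) (hC₂ : Convex ℝ C₂)
    (hy₁ : y ∈ C₁) (hy₂ : y ∈ C₂) :
    feasibleCone C₁ y ⊓ feasibleCone C₂ y ≤ feasibleCone (C₁ ∩ C₂) y := by
  rintro d ⟨hd₁, hd₂⟩
  obtain ⟨ε₁, hε₁, h₁⟩ := (mem_feasibleCone_iff hC₁ hy₁).1 hd₁
  obtain ⟨ε₂, hε₂, h₂⟩ := (mem_feasibleCone_iff hC₂ hy₂).1 hd₂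
  refine (mem_feasibleCone_iff (hC₁.inter hC₂) ⟨hy₁, hy₂⟩).2
    ⟨min ε₁ ε₂, lt_min hε₁ hε₂, ?_, ?_⟩
  · exact hC₁.add_smul_mem_of_le hy₁ h₁ (le_min hε₁.le hε₂.le) (min_le_left _ _)
  · exact hC₂.add_smul_mem_of_le hy₂ h₂ (le_min hε₁.le hε₂.le) (min_le_right _ _)

lemma lineal_feasibleCone_eq_bot (hC : Convex ℝ C) (hy : y ∈ C.extremePoints ℝ) :
    (feasibleCone C y).lineal = ⊥ := by
  refine (Submodule.eq_bot_iff _).2 fun d hd => ?_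
  obtain ⟨hd, hnd⟩ := PointedCone.mem_lineal.1 hd
  obtain ⟨ε₁, hε₁, h₁⟩ := (mem_feasibleCone_iff hC hy.1).1 hd
  obtain ⟨ε₂, hε₂, h₂⟩ := (mem_feasibleCone_iff hC hy.1).1 hnd
  have hseg : y ∈ openSegment ℝ (y + ε₁ • d) (y + ε₂ • -d) := by
    refine ⟨ε₂ / (ε₁ + ε₂), ε₁ / (ε₁ + ε₂), by positivity, by positivity, by field_simp; ring, ?_⟩
    match_scalars <;> field_simp <;> ring
  simpa [hε₁.ne'] using hy.2 h₁ h₂ hseg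

end

variable {P F : Set (ι → ℝ)}

lemma IsFace.subset (hF : IsFace P F) : F ⊆ P := by
  obtain ⟨-, c, rfl⟩ := hF
  exact Set.sep_subset _ _

lemma IsPolytope.convex {ι : Type*} {P : Set (ι → ℝ)} (hP : IsPolytope P) : Convex ℝ P := by
  obtain ⟨S, rfl⟩ := hP
  exact convex_convexHull ℝ _

lemma isFace_maximizers (f : Module.Dual ℝ (ι → ℝ)) {y : ι → ℝ} (hy : y ∈ P)
    (hmax : ∀ z ∈ P, f z ≤ f y) : IsFace P {x ∈ P | ∀ z ∈ P, f z ≤ f x} := by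
  classical
  set c : ι → ℝ := fun i => f fun j => if i = j then 1 else 0
  have hc (z : ι → ℝ) : ∑ i, c i * z i = f z := by
    simp only [f.pi_apply_eq_sum_univ z, smul_eq_mul, mul_comm, c]
  exact ⟨⟨y, hy, hmax⟩, c, by simp only [hc]⟩

lemma sub_mem_feasibleCone_of_mem_minimal_face {Q F : Set (ι → ℝ)} (hQ : IsPolytope Q)
    (hF : IsFace Q F) {y : ι → ℝ} (hyF : y ∈ F) (hmin : ∀ G, IsFace Q G → y ∈ G → F ⊆ G)
    {x : ι → ℝ} (hx : x ∈ F) : y - x ∈ feasibleCone Q y := by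
  have hyQ := hF.subset hyF
  obtain ⟨S, rfl⟩ := hQ
  obtain hcone | ⟨f, hf, hfx⟩ :=
    PointedCone.mem_hull_range_or_exists_dual (fun s : S => (s : ι → ℝ) - y) (y - x)
  · refine Submodule.span_mono ?_ hcone
    rintro _ ⟨s, rfl⟩
    exact ⟨s, subset_convexHull ℝ _ s.2, neg_add_eq_sub y s⟩
  have hmax : ∀ z ∈ convexHull ℝ (S : Set (ι → ℝ)), f z ≤ f y := by
    refine fun z hz => convexHull_min (fun s hs => ?_) (convex_halfSpace_le f.isLinear _) hz
    simpa [sub_nonpos] using hf ⟨s, hs⟩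
  have hxG := hmin _ (isFace_maximizers f hyQ hmax) ⟨hyQ, hmax⟩ hx
  linarith [hxG.2 y hyQ, map_sub f y x]

lemma vectorSpan_le_lineal_feasibleCone {Q F : Set (ι → ℝ)} (hQ : IsPolytope Q)
    (hF : IsFace Q F) {y : ι → ℝ} (hyF : y ∈ F) (hmin : ∀ G, IsFace Q G → y ∈ G → F ⊆ G) :
    vectorSpan ℝ F ≤ (feasibleCone Q y).lineal := by
  rw [vectorSpan_eq_span_vsub_set_right ℝ hyF, Submodule.span_le]
  rintro _ ⟨x, hx, rfl⟩
  refine PointedCone.mem_lineal.2 ⟨sub_mem_feasibleCone (hF.subset hx), ?_⟩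
  simpa only [vsub_eq_sub, neg_sub] using
    sub_mem_feasibleCone_of_mem_minimal_face hQ hF hyF hmin hx

/-- If `y` is a vertex of the intersection of two polytopes `Q₁, Q₂`
and `F₁, F₂` are the minimal faces of `Q₁, Q₂` containing `y`, then the affine hulls
of `F₁` and `F₂` intersect exactly in `y`. -/
theorem affineSpan_minimal_faces_inter {n : ℕ} (Q₁ Q₂ : Set (Fin n → ℝ))
    (hQ₁ : IsPolytope Q₁) (hQ₂ : IsPolytope Q₂)
    (y : Fin n → ℝ) (hy : y ∈ Set.extremePoints ℝ (Q₁ ∩ Q₂))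
    (F₁ F₂ : Set (Fin n → ℝ))
    (hF₁ : IsFace Q₁ F₁) (hyF₁ : y ∈ F₁)
    (hmin₁ : ∀ F, IsFace Q₁ F → y ∈ F → F₁ ⊆ F)
    (hF₂ : IsFace Q₂ F₂) (hyF₂ : y ∈ F₂)
    (hmin₂ : ∀ F, IsFace Q₂ F → y ∈ F → F₂ ⊆ F) :
    (affineSpan ℝ F₁ : Set (Fin n → ℝ)) ∩ (affineSpan ℝ F₂ : Set (Fin n → ℝ)) = {y} := by
  refine Set.Subset.antisymm (fun z ⟨hz₁, hz₂⟩ => ?_) (Set.singleton_subset_iff.2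
    ⟨subset_affineSpan ℝ F₁ hyF₁, subset_affineSpan ℝ F₂ hyF₂⟩)
  have hd₁ := vectorSpan_le_lineal_feasibleCone hQ₁ hF₁ hyF₁ hmin₁
    (vsub_mem_vectorSpan_of_mem_affineSpan_of_mem_affineSpan hz₁ (subset_affineSpan ℝ F₁ hyF₁))
  have hd₂ := vectorSpan_le_lineal_feasibleCone hQ₂ hF₂ hyF₂ hmin₂
    (vsub_mem_vectorSpan_of_mem_affineSpan_of_mem_affineSpan hz₂ (subset_affineSpan ℝ F₂ hyF₂))
  have hinter := feasibleCone_inf_le_feasibleCone_inter (y := y) hQ₁.convex hQ₂.convex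
    (hF₁.subset hyF₁) (hF₂.subset hyF₂)
  have hd : z - y ∈ (feasibleCone (Q₁ ∩ Q₂) y).lineal :=
    PointedCone.mem_lineal.2 ⟨hinter ⟨hd₁.1, hd₂.1⟩, hinter ⟨hd₁.2, hd₂.2⟩⟩
  rw [lineal_feasibleCone_eq_bot (hQ₁.convex.inter hQ₂.convex) hy] at hd
  exact sub_eq_zero.1 hd
end

section
/- Let P ⊆ ℝⁿ be a polytope, let m ≤ n, let π : ℝⁿ → ℝᵐ be the projection onto the first m coordinates, and let w ∈ ℝᵐ with π⁻¹({w}) ∩ P ≠ ∅. Let F be an inclusionwise minimal face of P among the faces of P intersecting π⁻¹({w}), i.e., F intersects π⁻¹({w}) and no face of P properly contained in F intersects π⁻¹({w}). Then the restriction of π to F is injective. -/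
open Finset Pointwise

variable {ι : Type*} [Fintype ι]

/-!
Suppose `a ≠ b` in `F` have the same image and pick a functional `φ` with `φ (a - b) = 1`.
A point `q` maximizing `φ` on the compact set `F ∩ π⁻¹{w}` cannot move in direction `a - b`
inside `F`, so `q` is not in the relative interior of `F`, and a supporting hyperplane of `F`
at `q` cuts out a proper exposed face of `F` through `q`. For polytopes an exposed face of an
exposed face is exposed (maximize `l` first and `g` second, i.e. maximize `N • l + g` for
large `N`), so this face contradicts the minimality of `F`.
-/

open Set Filter Topology

theorem eventually_mul_add_le_mul_add_iff (a a' b b' : ℝ) :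
    ∀ᶠ N : ℝ in atTop, N * a + b ≤ N * a' + b' ↔ a < a' ∨ a = a' ∧ b ≤ b' := by
  rcases lt_trichotomy a a' with h | rfl | h
  · filter_upwards [eventually_ge_atTop ((b - b') / (a' - a))] with N hN
    have : b - b' ≤ N * (a' - a) := (div_le_iff₀ (sub_pos.mpr h)).mp hN
    simp only [h, true_or, iff_true]
    linarith
  · simp
  · filter_upwards [eventually_gt_atTop ((b' - b) / (a - a'))] with N hN
    have : b' - b < N * (a - a') := (div_lt_iff₀ (sub_pos.mpr h)).mp hN
    simp only [h.not_gt, h.ne', false_and, or_self, iff_false, not_le]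
    linarith

namespace ContinuousLinearMap

variable {E : Type*} [AddCommGroup E] [Module ℝ E] [TopologicalSpace E]

theorem toExposed_convexHull (l : StrongDual ℝ E) (s : Set E) :
    l.toExposed (convexHull ℝ s) = convexHull ℝ (l.toExposed s) := by
  apply Set.Subset.antisymm
  · rintro x ⟨hx, hxmax⟩
    obtain ⟨ι, t, w, z, hw₀, hw₁, hz, rfl⟩ := (convexHull_eq s).subset hx
    have hle : ∀ i ∈ t, l (z i) ≤ l (t.centerMass w z) := fun i hi =>
      hxmax _ (subset_convexHull ℝ s (hz i hi))
    have hsum : ∑ i ∈ t, w i * (l (t.centerMass w z) - l (z i)) = 0 := by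
      simp only [mul_sub, Finset.sum_sub_distrib, ← Finset.sum_mul, hw₁, one_mul,
        t.centerMass_eq_of_sum_1 _ hw₁, map_sum, map_smul, smul_eq_mul, sub_self]
    have hmax : ∀ i ∈ t, w i ≠ 0 → l (z i) = l (t.centerMass w z) := fun i hi hwi =>
      le_antisymm (hle i hi) <| sub_nonpos.mp <| le_of_eq <|
        (mul_eq_zero.mp ((Finset.sum_eq_zero_iff_of_nonneg fun j hj =>
          mul_nonneg (hw₀ j hj) (sub_nonneg.mpr (hle j hj))).mp hsum i hi)).resolve_left hwi
    classical
    rw [← t.centerMass_filter_ne_zero]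
    refine Finset.centerMass_mem_convexHull _ (fun i hi => hw₀ i (Finset.mem_filter.mp hi).1)
      (by rw [Finset.sum_filter_ne_zero, hw₁]; exact one_pos) fun i hi => ?_
    obtain ⟨hi, hwi⟩ := Finset.mem_filter.mp hi
    refine ⟨hz i hi, fun y hy => ?_⟩
    rw [hmax i hi hwi]
    exact hxmax y (subset_convexHull ℝ s hy)
  · intro x hx
    obtain ⟨p, hp⟩ := convexHull_nonempty_iff.mp ⟨x, hx⟩
    have hpx : l p ≤ l x :=
      convexHull_min (fun e he => he.2 p hp.1) ((convex_Ici _).linear_preimage l.toLinearMap) hx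
    refine ⟨convexHull_mono (sep_subset _ _) hx, fun y hy => le_trans ?_ hpx⟩
    exact convexHull_min hp.2 ((convex_Iic _).linear_preimage l.toLinearMap) hy

theorem eventually_toExposed_smul_add {s : Set E} (hs : s.Finite) (l g : StrongDual ℝ E) :
    ∀ᶠ N : ℝ in atTop, (N • l + g).toExposed s = g.toExposed (l.toExposed s) := by
  have hlex : ∀ᶠ N : ℝ in atTop, ∀ x ∈ s, ∀ y ∈ s,
      ((N • l + g) y ≤ (N • l + g) x ↔ l y < l x ∨ l y = l x ∧ g y ≤ g x) := by
    simp only [hs.eventually_all]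
    intro x _ y _
    simpa using eventually_mul_add_le_mul_add_iff (l y) (l x) (g y) (g x)
  filter_upwards [hlex] with N hN
  ext x
  constructor
  · rintro ⟨hx, hmax⟩
    have hl : ∀ y ∈ s, l y ≤ l x := fun y hy =>
      ((hN x hx y hy).mp (hmax y hy)).elim le_of_lt fun h => h.1.le
    refine ⟨⟨hx, hl⟩, fun y ⟨hy, hly⟩ => ?_⟩
    exact (((hN x hx y hy).mp (hmax y hy)).resolve_left (hly x hx).not_gt).2
  · rintro ⟨⟨hx, hl⟩, hg⟩
    refine ⟨hx, fun y hy => (hN x hx y hy).mpr ?_⟩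
    rcases (hl y hy).lt_or_eq with h | h
    · exact Or.inl h
    · exact Or.inr ⟨h, hg y ⟨hy, fun u hu => h ▸ hl u hu⟩⟩

end ContinuousLinearMap

theorem IsExposed.isExposed_toExposed_of_finite {E : Type*} [AddCommGroup E] [Module ℝ E]
    [TopologicalSpace E] {s F : Set E} (hs : s.Finite) (hF : IsExposed ℝ (convexHull ℝ s) F)
    (g : StrongDual ℝ E) : IsExposed ℝ (convexHull ℝ s) (g.toExposed F) := by
  rcases F.eq_empty_or_nonempty with rfl | hne
  · simpa [ContinuousLinearMap.toExposed] using isExposed_empty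
  obtain ⟨l, rfl⟩ := hF hne
  change IsExposed ℝ _ (g.toExposed (l.toExposed (convexHull ℝ s)))
  obtain ⟨N, hN⟩ := (ContinuousLinearMap.eventually_toExposed_smul_add hs l g).exists
  rw [ContinuousLinearMap.toExposed_convexHull, ContinuousLinearMap.toExposed_convexHull,
    ← hN, ← ContinuousLinearMap.toExposed_convexHull]
  exact ContinuousLinearMap.toExposed.isExposed

section FiniteDimensional

variable {E : Type*} [NormedAddCommGroup E] [NormedSpace ℝ E] [FiniteDimensional ℝ E]

theorem Convex.exists_dual_nonpos_of_zero_notMem_interior {D : Set E} (hD : Convex ℝ D)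
    (h0 : 0 ∈ D) (hspan : Submodule.span ℝ D = ⊤) (hint : 0 ∉ interior D) :
    ∃ f : StrongDual ℝ E, (∀ x ∈ D, f x ≤ 0) ∧ ∃ x ∈ D, f x < 0 := by
  have hne : (interior D).Nonempty := by
    rw [hD.interior_nonempty_iff_affineSpan_eq_top,
      AffineSubspace.affineSpan_eq_top_iff_vectorSpan_eq_top_of_nonempty ℝ E E ⟨0, h0⟩,
      vectorSpan_eq_span_vsub_set_right ℝ h0]
    simpa using hspan
  obtain ⟨f, u, hf, hfD, hu⟩ := geometric_hahn_banach_of_nonempty_interior hD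
    (convex_singleton 0) (disjoint_singleton_right.mpr hint) hne (singleton_nonempty 0)
  have hfD' : ∀ x ∈ D, f x ≤ 0 := fun x hx => (hfD x hx).trans (by simpa using hu 0 rfl)
  refine ⟨f, hfD', ?_⟩
  by_contra! h
  exact hf <| ContinuousLinearMap.coe_injective <|
    LinearMap.ext_on hspan fun x hx => le_antisymm (hfD' x hx) (h x hx)

theorem Convex.exists_dual_nonpos_of_forall_smul_notMem {D : Set E} (hD : Convex ℝ D)
    (h0 : 0 ∈ D) {z : E} (hz : z ∈ Submodule.span ℝ D)
    (hray : ∀ ε : ℝ, 0 < ε → ε • z ∉ D) :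
    ∃ f : StrongDual ℝ E, (∀ x ∈ D, f x ≤ 0) ∧ ∃ x ∈ D, f x < 0 := by
  set V := Submodule.span ℝ D
  have hint : (0 : V) ∉ interior ((↑) ⁻¹' D) := by
    intro h
    have hlim : Tendsto (fun ε : ℝ => ε • (⟨z, hz⟩ : V)) (𝓝[>] 0) (𝓝 0) := by
      simpa using (tendsto_nhdsWithin_of_tendsto_nhds (tendsto_id (x := 𝓝 (0 : ℝ)))).smul_const
        (⟨z, hz⟩ : V)
    obtain ⟨ε, hεD, hε⟩ :=
      ((hlim.eventually (mem_interior_iff_mem_nhds.mp h)).and self_mem_nhdsWithin).exists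
    exact hray ε hε hεD
  obtain ⟨f, hfD, x, hx, hfx⟩ :=
    (hD.linear_preimage V.subtype).exists_dual_nonpos_of_zero_notMem_interior h0
      Submodule.span_span_coe_preimage hint
  obtain ⟨g, hg, -⟩ := exists_extension_norm_eq V f
  refine ⟨g, fun y hy => ?_, x, hx, ?_⟩
  · exact (hg ⟨y, Submodule.subset_span hy⟩).trans_le (hfD _ hy)
  · rwa [hg]

theorem Convex.exists_toExposed_ne_of_forall_add_smul_notMem {F : Set E} (hF : Convex ℝ F)
    {q a b : E} (hq : q ∈ F) (ha : a ∈ F) (hb : b ∈ F)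
    (hray : ∀ ε : ℝ, 0 < ε → q + ε • (a - b) ∉ F) :
    ∃ l : StrongDual ℝ E, q ∈ l.toExposed F ∧ l.toExposed F ≠ F := by
  have hmem : ∀ y ∈ F, y - q ∈ (· + q) ⁻¹' F := by simp
  have hspan : a - b ∈ Submodule.span ℝ ((· + q) ⁻¹' F) := by
    simpa using Submodule.sub_mem _ (Submodule.subset_span (hmem a ha))
      (Submodule.subset_span (hmem b hb))
  obtain ⟨f, hfF, x, hx, hfx⟩ :=
    (hF.translate_preimage_left q).exists_dual_nonpos_of_forall_smul_notMem (by simpa using hq)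
      hspan fun ε hε h => hray ε hε (by rwa [add_comm])
  refine ⟨f, ⟨hq, fun y hy => ?_⟩, fun h => ?_⟩
  · simpa using hfF _ (hmem y hy)
  · have hxq : x + q ∈ f.toExposed F := h.symm ▸ hx
    have := hxq.2 q hq
    rw [map_add] at this
    linarith

theorem IsExposed.injOn_of_minimal {M : Type*} [NormedAddCommGroup M] [NormedSpace ℝ M]
    {s F : Set E} (hs : s.Finite) (hF : IsExposed ℝ (convexHull ℝ s) F) (π : E →ₗ[ℝ] M)
    {w : M} (hFw : (F ∩ π ⁻¹' {w}).Nonempty)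
    (hmin : ∀ G, IsExposed ℝ (convexHull ℝ s) G → G ⊆ F →
      (G ∩ π ⁻¹' {w}).Nonempty → G = F) :
    InjOn π F := by
  intro a ha b hb hab
  by_contra hne
  obtain ⟨φ, hφ⟩ := SeparatingDual.exists_eq_one (R := ℝ) (sub_ne_zero.mpr hne)
  have hfiber : IsCompact (F ∩ π ⁻¹' {w}) :=
    (hF.isCompact (hs.isCompact_convexHull (𝕜 := ℝ))).inter_right
      (isClosed_singleton.preimage π.continuous_of_finiteDimensional)
  obtain ⟨q, ⟨hqF, hqw⟩, hqmax⟩ := hfiber.exists_isMaxOn hFw φ.continuous.continuousOn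
  have hray : ∀ ε : ℝ, 0 < ε → q + ε • (a - b) ∉ F := by
    intro ε hε hqε
    have hle := hqmax ⟨hqε, by simpa [hab] using hqw⟩
    simp only [mem_ofPred_eq, map_add, map_smul, hφ, smul_eq_mul, mul_one] at hle
    linarith
  obtain ⟨l, hql, hproper⟩ :=
    (hF.convex (convex_convexHull ℝ s)).exists_toExposed_ne_of_forall_add_smul_notMem hqF ha hb
      hray
  exact hproper (hmin _ (hF.isExposed_toExposed_of_finite hs l) (sep_subset _ _) ⟨q, hql, hqw⟩)

end FiniteDimensional

theorem isFace_iff_isExposed {P F : Set (ι → ℝ)} :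
    IsFace P F ↔ F.Nonempty ∧ IsExposed ℝ P F := by
  refine and_congr_right fun hF => ⟨?_, fun h => ?_⟩
  · rintro ⟨c, rfl⟩ -
    refine ⟨∑ i, c i • ContinuousLinearMap.proj i, ?_⟩
    simp
  · obtain ⟨l, rfl⟩ := h hF
    classical
    obtain ⟨c, hc⟩ : ∃ c : ι → ℝ, ∀ x, l x = ∑ i, c i * x i :=
      ⟨_, fun x => by simpa [mul_comm] using (l : (ι → ℝ) →ₗ[ℝ] ℝ).pi_apply_eq_sum_univ x⟩
    exact ⟨c, by simp only [hc]⟩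

theorem projection_injective_on_minimal_face_general {m n : ℕ} (hmn : m ≤ n)
    (P : Set (Fin n → ℝ)) (hP : IsPolytope P)
    (π : (Fin n → ℝ) → (Fin m → ℝ)) (hπ : π = fun x (i : Fin m) => x (Fin.castLE hmn i))
    (w : Fin m → ℝ)
    (F : Set (Fin n → ℝ)) (hF : IsFace P F)
    (hFw : (F ∩ π ⁻¹' {w}).Nonempty)
    (hmin : ∀ F', IsFace P F' → F' ⊆ F → (F' ∩ π ⁻¹' {w}).Nonempty → F' = F) :
    Set.InjOn π F := by
  obtain ⟨S, rfl⟩ := hP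
  subst hπ
  exact (isFace_iff_isExposed.mp hF).2.injOn_of_minimal S.finite_toSet
    (LinearMap.funLeft ℝ ℝ (Fin.castLE hmn)) hFw fun G hG hGF hGw =>
      hmin G (isFace_iff_isExposed.mpr ⟨hGw.mono inter_subset_left, hG⟩) hGF hGw

/-- If `F` is an inclusionwise minimal face of a polytope `P` among
the faces intersecting the fiber `π⁻¹({w})` of the projection onto the first `m`
coordinates, then `π` is injective on `F`. -/
theorem projection_injective_on_minimal_face {m n : ℕ} (hmn : m ≤ n)
    (P : Set (Fin n → ℝ)) (hP : IsPolytope P)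
    (π : (Fin n → ℝ) → (Fin m → ℝ)) (hπ : π = fun x (i : Fin m) => x (Fin.castLE hmn i))
    (w : Fin m → ℝ) (hw : (π ⁻¹' {w} ∩ P).Nonempty)
    (F : Set (Fin n → ℝ)) (hF : IsFace P F)
    (hFw : (F ∩ π ⁻¹' {w}).Nonempty)
    (hmin : ∀ F', IsFace P F' → F' ⊆ F → (F' ∩ π ⁻¹' {w}).Nonempty → F' = F) :
    Set.InjOn π F :=
  projection_injective_on_minimal_face_general hmn P hP π hπ w F hF hFw hmin
end

section
/- Let A be an m × n totally unimodular matrix with real entries, let b ∈ ℤᵐ, and let P := {x ∈ ℝⁿ | Ax ≤ b}. Then P satisfies condition (★): for every nonnegative integer k, every r ∈ {0,…,k} and every integer vector w ∈ ℤⁿ, the set rP ∩ (w − (k−r)P) is box-integer. -/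
open Finset Pointwise

variable {ι : Type*} [Fintype ι]

/-!
For `0 < r < k` the set `rP ∩ (w - (k - r)P)` is `{x | A w - (k - r) b ≤ A x ≤ r b}`, and its
intersection with an integer box is `{x | [A; I; -A; -I] x ≤ d}` for an integer vector `d`, with a
stacked matrix that is again totally unimodular. A bounded polyhedron given by a totally unimodular
system with integral right-hand side is integral: every face is exposed, so it contains an extreme
point of the polyhedron (Krein–Milman); the rows tight at an extreme point contain a nonsingular
square subsystem, whose determinant is `±1`, so the point is integral. For `r = 0` or `r = k` one
of the two sets lies in a single integer point.
-/

theorem isIntegerVec_iff {n : Type*} {x : n → ℝ} :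
    IsIntegerVec x ↔ ∃ z : n → ℤ, x = fun i => (z i : ℝ) :=
  ⟨fun h => ⟨fun i => (h i).choose, funext fun i => (h i).choose_spec⟩,
    fun ⟨z, hz⟩ i => ⟨z i, by rw [hz]⟩⟩

namespace Matrix

variable {m n R : Type*}

theorem IsTotallyUnimodular.signType_smul_rows [CommRing R] {A : Matrix m n R}
    (hA : A.IsTotallyUnimodular) (s : m → SignType) :
    (of fun i => (s i : R) • A i).IsTotallyUnimodular := by
  rw [isTotallyUnimodular_iff] at hA ⊢
  intro k f g
  obtain ⟨t, ht⟩ := hA k f g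
  have hsub : (of fun i => (s i : R) • A i).submatrix f g
      = diagonal (fun i => (s (f i) : R)) * A.submatrix f g := by
    ext i j; simp [diagonal_mul]
  refine ⟨(∏ i, s (f i)) * t, ?_⟩
  rw [hsub, det_mul, det_diagonal, ← ht, SignType.coe_mul]
  exact congrArg (· * (t : R)) (map_prod (SignType.castHom : SignType →*₀ R) _ _)

theorem IsTotallyUnimodular.fromRows_neg [CommRing R] {A : Matrix m n R}
    (hA : A.IsTotallyUnimodular) : (fromRows A (-A)).IsTotallyUnimodular := by
  have h : fromRows A (-A) =
      of fun i => ((Sum.elim 1 (-1) i : SignType) : R) • A.submatrix (Sum.elim id id) id i := by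
    ext (i | i) j <;> simp
  rw [h]
  exact (hA.submatrix _ _).signType_smul_rows _

theorem IsTotallyUnimodular.exists_map_intCast_eq [CommRing R] {A : Matrix m n R}
    (hA : A.IsTotallyUnimodular) : ∃ A₀ : Matrix m n ℤ, A₀.map (↑) = A := by
  choose s hs using hA.apply
  exact ⟨of fun i j => (s i j : ℤ), by ext i j; simp [hs]⟩

theorem IsTotallyUnimodular.isIntegerVec_mulVec [Fintype n] {A : Matrix m n ℝ}
    (hA : A.IsTotallyUnimodular) {x : n → ℝ} (hx : IsIntegerVec x) : IsIntegerVec (A *ᵥ x) := by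
  obtain ⟨A₀, rfl⟩ := hA.exists_map_intCast_eq
  obtain ⟨z, rfl⟩ := isIntegerVec_iff.1 hx
  exact fun i => ⟨(A₀ *ᵥ z) i, (RingHom.map_mulVec (Int.castRingHom ℝ) A₀ z i).symm⟩

theorem IsTotallyUnimodular.isIntegerVec_of_mulVec_eq [Fintype n] [DecidableEq n]
    {B : Matrix n n ℝ} (hB : B.IsTotallyUnimodular) (hdet : B.det ≠ 0) {x d : n → ℝ}
    (hd : IsIntegerVec d) (hx : B *ᵥ x = d) : IsIntegerVec x := by
  obtain ⟨B₀, rfl⟩ := hB.exists_map_intCast_eq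
  obtain ⟨d₀, rfl⟩ := isIntegerVec_iff.1 hd
  have hdet_cast : (B₀.map (↑) : Matrix n n ℝ).det = B₀.det :=
    ((Int.castRingHom ℝ).map_det B₀).symm
  have hdet₀ : IsUnit B₀.det := by
    obtain ⟨s, hs⟩ := (isTotallyUnimodular_iff_fintype _).1 hB n id id
    rw [submatrix_id_id, hdet_cast, ← SignType.intCast_cast, Int.cast_inj] at hs
    rw [hdet_cast, ← hs] at hdet
    rw [← hs]
    cases s <;> simp_all [Int.isUnit_iff]
  have hcast : B₀.map (↑) *ᵥ (fun i => ((B₀⁻¹ *ᵥ d₀) i : ℝ)) = fun i => (d₀ i : ℝ) := by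
    ext i
    refine (RingHom.map_mulVec (Int.castRingHom ℝ) B₀ _ i).symm.trans ?_
    rw [mulVec_mulVec, mul_nonsing_inv _ hdet₀, one_mulVec]
    rfl
  refine isIntegerVec_iff.2 ⟨B₀⁻¹ *ᵥ d₀, mulVec_injective_iff_isUnit.2 ?_ (hx.trans hcast.symm)⟩
  exact (isUnit_iff_isUnit_det _).2 hdet.isUnit

theorem exists_submatrix_det_ne_zero_of_mulVec_injective {K : Type*} [Field K] [Fintype m]
    [Fintype n] [DecidableEq n] {N : Matrix m n K} (hN : Function.Injective N.mulVec) :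
    ∃ g : n → m, (N.submatrix g id).det ≠ 0 := by
  obtain ⟨κ, a, ha, hspan, hli⟩ := exists_linearIndependent' K N.row
  have : Fintype κ := Fintype.ofInjective a ha
  have hrank : N.rank = Fintype.card n := by
    rw [rank, LinearMap.finrank_range_of_inj (by exact hN), Module.finrank_fintype_fun_eq_card]
  have hcard : Fintype.card κ = Fintype.card n := by
    rw [← finrank_span_eq_card hli, hspan, ← rank_eq_finrank_span_row, hrank]
  let e : n ≃ κ := Fintype.equivOfCardEq hcard.symm
  refine ⟨a ∘ e, ((isUnit_iff_isUnit_det _).1 ?_).ne_zero⟩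
  exact linearIndependent_rows_iff_isUnit.1 (hli.comp e e.injective)

end Matrix

open Matrix Filter Topology

section Polyhedron

variable {m n : Type*} [Fintype n]

theorem eq_zero_of_tight_mulVec_eq_zero [Finite m] {M : Matrix m n ℝ} {d : m → ℝ}
    {x u : n → ℝ} (hx : x ∈ Set.extremePoints ℝ {y | M *ᵥ y ≤ d})
    (hu : ∀ i, (M *ᵥ x) i = d i → (M *ᵥ u) i = 0) : u = 0 := by
  have hline : ∀ t : ℝ, M *ᵥ (x + t • u) = M *ᵥ x + t • M *ᵥ u := fun t => by
    rw [mulVec_add, mulVec_smul]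
  have hnear : ∀ᶠ t in 𝓝 (0 : ℝ), x + t • u ∈ {y | M *ᵥ y ≤ d} := by
    simp only [Set.mem_ofPred_eq, hline, Pi.le_def, eventually_all]
    intro i
    rcases (hx.1 i).eq_or_lt with htight | hslack
    · exact .of_forall fun t => by simp [hu i htight, htight]
    · have hcont : Continuous fun t : ℝ => (M *ᵥ x + t • M *ᵥ u) i := by fun_prop
      exact (hcont.continuousAt.eventually_lt continuousAt_const (by simpa using hslack)).mono
        fun _ => le_of_lt
  obtain ⟨ε, hε, hball⟩ := Metric.eventually_nhds_iff.1 hnear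
  have hhalf : dist (ε / 2) 0 < ε := by
    rw [Real.dist_eq, sub_zero, abs_of_pos (half_pos hε)]
    exact half_lt_self hε
  have hplus := hball hhalf
  have hminus : x - (ε / 2) • u ∈ {y | M *ᵥ y ≤ d} := by
    simpa [sub_eq_add_neg] using hball (y := -(ε / 2)) (by rwa [dist_zero_right, norm_neg,
      ← dist_zero_right])
  have hfix := hx.2 hplus hminus (mem_openSegment_add_sub x _)
  rwa [add_eq_left, smul_eq_zero, or_iff_right (half_pos hε).ne'] at hfix

theorem Matrix.IsTotallyUnimodular.isIntegerVec_of_mem_extremePoints [Fintype m]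
    {M : Matrix m n ℝ} (hM : M.IsTotallyUnimodular) {d : m → ℝ} (hd : IsIntegerVec d)
    {x : n → ℝ} (hx : x ∈ Set.extremePoints ℝ {y | M *ᵥ y ≤ d}) : IsIntegerVec x := by
  classical
  let N : Matrix {i // (M *ᵥ x) i = d i} n ℝ := M.submatrix Subtype.val id
  have hN : Function.Injective N.mulVec := fun u v huv =>
    sub_eq_zero.1 <| eq_zero_of_tight_mulVec_eq_zero hx fun i hi => by
      rw [mulVec_sub, Pi.sub_apply]
      exact sub_eq_zero.2 (congrFun huv ⟨i, hi⟩)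
  obtain ⟨g, hg⟩ := exists_submatrix_det_ne_zero_of_mulVec_injective hN
  exact ((hM.submatrix Subtype.val id).submatrix g id).isIntegerVec_of_mulVec_eq hg
    (fun k => hd (g k)) (funext fun k => (g k).2)

theorem isIntegerPolyhedron_of_isCompact {Q : Set (n → ℝ)} (hQ : IsCompact Q)
    (h : ∀ x ∈ Set.extremePoints ℝ Q, IsIntegerVec x) : IsIntegerPolyhedron Q := by
  rintro F ⟨hne, c, rfl⟩
  have hexp : IsExposed ℝ Q {x ∈ Q | ∀ y ∈ Q, ∑ i, c i * y i ≤ ∑ i, c i * x i} := fun _ =>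
    ⟨∑ i, c i • ContinuousLinearMap.proj i, by ext; simp⟩
  obtain ⟨x, hx⟩ := (hexp.isCompact hQ).extremePoints_nonempty hne
  exact ⟨x, hx.1, h x (hexp.isExtreme.extremePoints_subset_extremePoints hx)⟩

theorem Matrix.IsTotallyUnimodular.isIntegerPolyhedron_setOf_mulVec_le [Fintype m]
    {M : Matrix m n ℝ} (hM : M.IsTotallyUnimodular) {d : m → ℝ} (hd : IsIntegerVec d)
    (hbdd : Bornology.IsBounded {y | M *ᵥ y ≤ d}) : IsIntegerPolyhedron {y | M *ᵥ y ≤ d} :=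
  isIntegerPolyhedron_of_isCompact
    (Metric.isCompact_of_isClosed_isBounded (isClosed_le (by fun_prop) continuous_const) hbdd)
    fun _ hx => hM.isIntegerVec_of_mem_extremePoints hd hx

theorem isBoxInteger_of_forall_isIntegerVec {Q : Set (n → ℝ)} (h : ∀ x ∈ Q, IsIntegerVec x) :
    IsBoxInteger Q := by
  rintro c d - F ⟨⟨x, hx⟩, _, rfl⟩
  exact ⟨x, hx, h x hx.1.1⟩

theorem Matrix.IsTotallyUnimodular.isBoxInteger_setOf_mulVec_mem_Icc [Fintype m]
    {A : Matrix m n ℝ} (hA : A.IsTotallyUnimodular) {l u : m → ℝ} (hl : IsIntegerVec l)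
    (hu : IsIntegerVec u) : IsBoxInteger {x | A *ᵥ x ∈ Set.Icc l u} := by
  classical
  intro c d _
  let N : Matrix (m ⊕ n) n ℝ := fromRows A 1
  have hbox : {x ∈ {x | A *ᵥ x ∈ Set.Icc l u} | ∀ i, (c i : ℝ) ≤ x i ∧ x i ≤ d i} =
      {x | fromRows N (-N) *ᵥ x ≤
        Sum.elim (Sum.elim u (fun i => d i)) (-Sum.elim l (fun i => c i))} := by
    ext x
    simp only [Set.mem_ofPred_eq, Set.mem_Icc, N, fromRows_mulVec, neg_mulVec, one_mulVec,
      Sum.elim_le_elim_iff, ← Sum.elim_neg_neg, neg_le_neg_iff, forall_and, ← Pi.le_def]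
    tauto
  rw [hbox]
  refine hA.fromRows_one.fromRows_neg.isIntegerPolyhedron_setOf_mulVec_le ?_ ?_
  · rintro ((i | i) | (i | i))
    exacts [hu i, ⟨d i, rfl⟩, let ⟨z, hz⟩ := hl i; ⟨-z, by simp [hz]⟩, ⟨-c i, by simp⟩]
  · refine (Metric.isBounded_Icc (fun i => (c i : ℝ)) (fun i => (d i : ℝ))).subset ?_
    rw [← hbox]
    exact fun x hx => ⟨fun i => (hx.2 i).1, fun i => (hx.2 i).2⟩

theorem smul_setOf_mulVec_le {A : Matrix m n ℝ} {b : m → ℝ} {t : ℝ} (ht : 0 < t) :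
    t • {y | A *ᵥ y ≤ b} = {y | A *ᵥ y ≤ t • b} := by
  ext x
  rw [Set.mem_smul_set_iff_inv_smul_mem₀ ht.ne', Set.mem_ofPred_eq, Set.mem_ofPred_eq, mulVec_smul,
    ← smul_le_smul_iff_of_pos_left ht, smul_inv_smul₀ ht.ne']

theorem smul_inter_sub_smul_setOf_mulVec_le {A : Matrix m n ℝ} {b : m → ℝ} {r s : ℝ}
    (hr : 0 < r) (hs : 0 < s) (w : n → ℝ) :
    r • {y | A *ᵥ y ≤ b} ∩ (fun y => w - y) '' (s • {y | A *ᵥ y ≤ b}) =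
      {x | A *ᵥ x ∈ Set.Icc (A *ᵥ w - s • b) (r • b)} := by
  ext x
  rw [Set.mem_inter_iff, Set.mem_image_iff_of_inverse (sub_sub_cancel w) (sub_sub_cancel w),
    smul_setOf_mulVec_le hr, smul_setOf_mulVec_le hs]
  simp only [Set.mem_ofPred_eq, Set.mem_Icc, mulVec_sub, sub_le_comm]
  tauto

end Polyhedron

/-- A polyhedron `{x | Ax ≤ b}` defined by a totally unimodular matrix
`A` and an integer vector `b` satisfies condition (★). -/
theorem tu_conditionStar {m n : ℕ} (A : Matrix (Fin m) (Fin n) ℝ)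
    (hA : A.IsTotallyUnimodular) (b : Fin m → ℤ) :
    ConditionStar {x : Fin n → ℝ | ∀ i, ∑ j, A i j * x j ≤ (b i : ℝ)} := by
  intro k r _ w
  set B : Fin m → ℝ := fun i => b i
  set W : Fin n → ℝ := fun i => w i
  change IsBoxInteger ((r : ℝ) • {x | A *ᵥ x ≤ B} ∩
    (fun y => W - y) '' (((k - r : ℕ) : ℝ) • {x | A *ᵥ x ≤ B}))
  rcases r.eq_zero_or_pos with rfl | hr
  · refine isBoxInteger_of_forall_isIntegerVec fun x ⟨hx, _⟩ => ?_
    rw [Nat.cast_zero] at hx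
    rw [Set.mem_zero.1 (Set.zero_smul_set_subset _ hx)]
    exact fun i => ⟨0, by simp⟩
  rcases (k - r).eq_zero_or_pos with hs | hs
  · refine isBoxInteger_of_forall_isIntegerVec fun x ⟨_, y, hy, hxy⟩ => ?_
    rw [hs, Nat.cast_zero] at hy
    rw [← hxy, Set.mem_zero.1 (Set.zero_smul_set_subset _ hy)]
    exact fun i => ⟨w i, by simp [W]⟩
  rw [smul_inter_sub_smul_setOf_mulVec_le (by positivity) (by positivity)]
  obtain ⟨AW, hAW⟩ := isIntegerVec_iff.1 (hA.isIntegerVec_mulVec (x := W) fun i => ⟨w i, rfl⟩)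
  refine hA.isBoxInteger_setOf_mulVec_mem_Icc (fun i => ⟨AW i - (k - r : ℕ) * b i, ?_⟩)
    (fun i => ⟨r * b i, ?_⟩)
  · simp [hAW, B]
  · simp [B]
end
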